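/- If A is a symmetric positive-definite banded matrix with bandwidth k (A i j = 0 whenever |i - j| > k), then its Cholesky factor L also satisfies L i j = 0 whenever i - j > k; i.e., the banded structure is preserved by Cholesky factorization. -/

import Mathlib

/-! Column by column: if `j + k < i`, then every `L i x` with `x < j` already vanishes by induction
(as `x + k < i`), and `L j x = 0` for `x > j`, so `0 = A i j = ∑ x, L i x * L j x` collapses to
`L i j * L j j`; since `L j j ≠ 0`, `L i j = 0`. -/

open Matrix

theorem Matrix.mul_transpose_apply_eq_mul_of_triangular {ι R : Type*} [Fintype ι] [LinearOrder ι]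
    [NonUnitalNonAssocSemiring R] (L M : Matrix ι ι R) {i j : ι}
    (hL : ∀ x < j, L i x = 0) (hM : ∀ x, j < x → M j x = 0) :
    (L * Mᵀ) i j = L i j * M j j := by
  rw [mul_apply]
  refine Finset.sum_eq_single j (fun x _ hxj => ?_) (by simp)
  rcases hxj.lt_or_gt with hlt | hgt
  · rw [transpose_apply, hL x hlt, zero_mul]
  · rw [transpose_apply, hM x hgt, mul_zero]

theorem Matrix.lower_band_of_mul_transpose_lower_band {n : ℕ} {R : Type*} [Semiring R]
    [NoZeroDivisors R] (k : ℕ) (L : Matrix (Fin n) (Fin n) R)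
    (hlow : ∀ i j : Fin n, i < j → L i j = 0) (hdiag : ∀ i, L i i ≠ 0)
    (hband : ∀ i j : Fin n, (j : ℕ) + k < (i : ℕ) → (L * Lᵀ) i j = 0) :
    ∀ i j : Fin n, (j : ℕ) + k < (i : ℕ) → L i j = 0 := by
  intro i j
  induction j using WellFoundedLT.induction with
  | ind j ih =>
    intro hji
    have hcol : (L * Lᵀ) i j = L i j * L j j :=
      mul_transpose_apply_eq_mul_of_triangular L L
        (fun x hxj => ih x hxj (by have : (x : ℕ) < j := hxj; omega)) (hlow j)
    exact (mul_eq_zero.mp (hcol ▸ hband i j hji)).resolve_right (hdiag j)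

open Matrix in
theorem cholesky_preserves_band_general (n k : ℕ) (A L : Matrix (Fin n) (Fin n) ℝ)
    (hband : ∀ i j : Fin n, ((i : ℕ) + k < (j : ℕ) ∨ (j : ℕ) + k < (i : ℕ)) → A i j = 0)
    (hlow : ∀ i j : Fin n, i < j → L i j = 0)
    (hdiag : ∀ i, 0 < L i i)
    (hfac : A = L * Lᵀ) :
    ∀ i j : Fin n, (j : ℕ) + k < (i : ℕ) → L i j = 0 :=
  lower_band_of_mul_transpose_lower_band k L hlow (fun i => (hdiag i).ne')
    fun i j hji => hfac ▸ hband i j (Or.inr hji)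

open Matrix in
theorem cholesky_preserves_band (n k : ℕ) (A L : Matrix (Fin n) (Fin n) ℝ)
    (hsymm : Aᵀ = A) (hpd : A.PosDef)
    (hband : ∀ i j : Fin n, ((i : ℕ) + k < (j : ℕ) ∨ (j : ℕ) + k < (i : ℕ)) → A i j = 0)
    (hlow : ∀ i j : Fin n, i < j → L i j = 0)
    (hdiag : ∀ i, 0 < L i i)
    (hfac : A = L * Lᵀ) :
    ∀ i j : Fin n, (j : ℕ) + k < (i : ℕ) → L i j = 0 :=
  cholesky_preserves_band_general n k A L hband hlow hdiag hfac
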